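/- arXiv:1608.08744 — 2 statements merged into one kernel-verified Lean document; each statement's English description precedes it below -/
import Mathlib

section
/- Consider the two-player best-response mapping T: [0,1]² → [0,1]² given by T(σ₁, σ₂) = (ρ₁/p − 1/(R₁ − σ₂(R₁−R₂)), ρ₂/p − 1/(R₁ − σ₁(R₁−R₂))), where 0 < R₂ < R₁ and these values lie in [0,1]. If (R₁ − R₂)/R₂² < 1, then T is a contraction in the sup norm with modulus c = (R₁−R₂)/R₂² < 1, and hence T has a unique fixed point on its domain. -/
lemma key_aux (R₁ R₂ : ℝ) (hR : 0 < R₂) (hRR : R₂ < R₁) {s t : ℝ}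
    (hs1 : s ≤ 1) (ht1 : t ≤ 1) :
    |1 / (R₁ - s * (R₁ - R₂)) - 1 / (R₁ - t * (R₁ - R₂))| ≤
      (R₁ - R₂) / R₂ ^ 2 * |s - t| := by
  have hΔ : 0 < R₁ - R₂ := sub_pos.2 hRR
  have ha : R₂ ≤ R₁ - s * (R₁ - R₂) := by nlinarith
  have hb : R₂ ≤ R₁ - t * (R₁ - R₂) := by nlinarith
  have ha0 : 0 < R₁ - s * (R₁ - R₂) := lt_of_lt_of_le hR ha
  have hb0 : 0 < R₁ - t * (R₁ - R₂) := lt_of_lt_of_le hR hb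
  rw [div_sub_div _ _ ha0.ne' hb0.ne', one_mul, mul_one, abs_div]
  have h1 : |(R₁ - t * (R₁ - R₂)) - (R₁ - s * (R₁ - R₂))| = (R₁ - R₂) * |s - t| := by
    rw [show (R₁ - t * (R₁ - R₂)) - (R₁ - s * (R₁ - R₂)) = (s - t) * (R₁ - R₂) by ring,
      abs_mul, abs_of_pos hΔ, mul_comm]
  rw [h1, abs_of_pos (mul_pos ha0 hb0), div_mul_eq_mul_div]
  gcongr
  all_goals nlinarith [abs_nonneg (s - t)]

/-- The two-player best-response map
T(σ₁,σ₂) = (ρ₁/p − 1/(R₁ − σ₂(R₁−R₂)), ρ₂/p − 1/(R₁ − σ₁(R₁−R₂)))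
on [0,1]² is, when (R₁−R₂)/R₂² < 1, a contraction in the sup norm with
modulus c = (R₁−R₂)/R₂², and hence has a unique fixed point on [0,1]². -/
theorem stmt_4 (R₁ R₂ ρ₁ ρ₂ p : ℝ) (hR : 0 < R₂) (hRR : R₂ < R₁)
    (hp : 0 < p)
    (hmaps : Set.MapsTo
      (fun σ : ℝ × ℝ =>
        (ρ₁ / p - 1 / (R₁ - σ.2 * (R₁ - R₂)),
         ρ₂ / p - 1 / (R₁ - σ.1 * (R₁ - R₂))))
      (Set.Icc ((0:ℝ), (0:ℝ)) (1, 1)) (Set.Icc ((0:ℝ), (0:ℝ)) (1, 1)))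
    (hc : (R₁ - R₂) / R₂ ^ 2 < 1) :
    (∀ x ∈ Set.Icc ((0:ℝ), (0:ℝ)) (1, 1),
     ∀ y ∈ Set.Icc ((0:ℝ), (0:ℝ)) (1, 1),
      ‖(fun σ : ℝ × ℝ =>
          (ρ₁ / p - 1 / (R₁ - σ.2 * (R₁ - R₂)),
           ρ₂ / p - 1 / (R₁ - σ.1 * (R₁ - R₂)))) x -
        (fun σ : ℝ × ℝ =>
          (ρ₁ / p - 1 / (R₁ - σ.2 * (R₁ - R₂)),
           ρ₂ / p - 1 / (R₁ - σ.1 * (R₁ - R₂)))) y‖ ≤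
        ((R₁ - R₂) / R₂ ^ 2) * ‖x - y‖) ∧
    (∃! σ : ℝ × ℝ, σ ∈ Set.Icc ((0:ℝ), (0:ℝ)) (1, 1) ∧
      (ρ₁ / p - 1 / (R₁ - σ.2 * (R₁ - R₂)),
       ρ₂ / p - 1 / (R₁ - σ.1 * (R₁ - R₂))) = σ) := by
  have hΔ : 0 < R₁ - R₂ := sub_pos.2 hRR
  set c : ℝ := (R₁ - R₂) / R₂ ^ 2 with hcdef
  have hc0 : 0 ≤ c := by positivity
  set f : ℝ × ℝ → ℝ × ℝ := fun σ =>
    (ρ₁ / p - 1 / (R₁ - σ.2 * (R₁ - R₂)), ρ₂ / p - 1 / (R₁ - σ.1 * (R₁ - R₂))) with hf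
  have hlip : ∀ x ∈ Set.Icc ((0:ℝ), (0:ℝ)) (1, 1), ∀ y ∈ Set.Icc ((0:ℝ), (0:ℝ)) (1, 1),
      ‖f x - f y‖ ≤ c * ‖x - y‖ := by
    intro x hx y hy
    obtain ⟨⟨hx1, hx2⟩, ⟨hx3, hx4⟩⟩ := hx
    obtain ⟨⟨hy1, hy2⟩, ⟨hy3, hy4⟩⟩ := hy
    have h1 : ‖(f x - f y).1‖ ≤ c * ‖x - y‖ := by
      have := key_aux R₁ R₂ hR hRR hy4 hx4
      simp only [hf, Prod.fst_sub]
      have heq : (ρ₁ / p - 1 / (R₁ - x.2 * (R₁ - R₂))) - (ρ₁ / p - 1 / (R₁ - y.2 * (R₁ - R₂)))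
          = 1 / (R₁ - y.2 * (R₁ - R₂)) - 1 / (R₁ - x.2 * (R₁ - R₂)) := by ring
      rw [Real.norm_eq_abs, heq]
      refine this.trans ?_
      have : |y.2 - x.2| ≤ ‖x - y‖ := by
        rw [Prod.norm_def]
        refine le_trans ?_ (le_max_right _ _)
        rw [Prod.snd_sub, Real.norm_eq_abs, abs_sub_comm]
      nlinarith [abs_nonneg (y.2 - x.2)]
    have h2 : ‖(f x - f y).2‖ ≤ c * ‖x - y‖ := by
      have := key_aux R₁ R₂ hR hRR hy3 hx3
      simp only [hf, Prod.snd_sub]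
      have heq : (ρ₂ / p - 1 / (R₁ - x.1 * (R₁ - R₂))) - (ρ₂ / p - 1 / (R₁ - y.1 * (R₁ - R₂)))
          = 1 / (R₁ - y.1 * (R₁ - R₂)) - 1 / (R₁ - x.1 * (R₁ - R₂)) := by ring
      rw [Real.norm_eq_abs, heq]
      refine this.trans ?_
      have : |y.1 - x.1| ≤ ‖x - y‖ := by
        rw [Prod.norm_def]
        refine le_trans ?_ (le_max_left _ _)
        rw [Prod.fst_sub, Real.norm_eq_abs, abs_sub_comm]
      nlinarith [abs_nonneg (y.1 - x.1)]
    rw [Prod.norm_def]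
    exact max_le h1 h2
  refine ⟨hlip, ?_⟩
  -- set up contraction on the subtype
  set S : Set (ℝ × ℝ) := Set.Icc ((0:ℝ), (0:ℝ)) (1, 1) with hS
  have hSc : IsClosed S := isClosed_Icc
  have : CompleteSpace S := hSc.completeSpace_coe
  have hne : Nonempty S := ⟨⟨((0:ℝ), (0:ℝ)), Set.left_mem_Icc.2 (by constructor <;> norm_num)⟩⟩
  set g : S → S := hmaps.restrict f S S with hg
  have hK : ContractingWith (Real.toNNReal c) g := by
    constructor
    · simpa [Real.toNNReal_lt_one, hc0] using hc
    · refine LipschitzWith.of_dist_le_mul fun a b => ?_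
      have : dist (g a) (g b) = ‖f a.1 - f b.1‖ := by
        rw [Subtype.dist_eq, dist_eq_norm]
        congr 1
      rw [this, Subtype.dist_eq, dist_eq_norm]
      simpa [Real.coe_toNNReal c hc0] using hlip a.1 a.2 b.1 b.2
  set x : S := ContractingWith.fixedPoint g hK with hxdef
  have hx : Function.IsFixedPt g x := hK.fixedPoint_isFixedPt
  have hx' : ∀ y : S, Function.IsFixedPt g y → y = x := fun y hy => hK.fixedPoint_unique hy
  refine ⟨x.1, ⟨x.2, ?_⟩, ?_⟩
  · have := congrArg Subtype.val hx
    simpa [hg, hf] using this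
  · rintro y ⟨hy, hy'⟩
    have : (⟨y, hy⟩ : S) = x := hx' ⟨y, hy⟩ (Subtype.ext (by simpa [hg, hf] using hy'))
    exact congrArg Subtype.val this
end

section
/- Let R̄: {1,2,…} → (0,∞) be a nonincreasing function (average per-user data rate), and let r̄(σ_{-i}) = Σ_{m=0}^{n−1} P_{-i}(m)·R̄(m+1), where P_{-i}(m) is the Poisson-binomial probability that exactly m of the other n−1 users connect, with independent connection probabilities σ_j, j ≠ i. Then r̄ is nonincreasing in each coordinate σ_j: if σ_j ≤ σ_j' (all other coordinates equal), then r̄(...,σ_j',...) ≤ r̄(...,σ_j,...). -/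
open Finset

/-- Poisson-binomial probability that exactly m of the other users connect. -/
def poissonBinom {n : ℕ} (σ : Fin n → ℝ) (m : ℕ) : ℝ :=
  ∑ S ∈ Finset.univ.powersetCard m,
    (∏ j ∈ S, σ j) * ∏ j ∈ Sᶜ, (1 - σ j)

/-- Expected data rate r̄(σ) = Σ_{m=0}^{n} P(m)·R̄(m+1). -/
def expRate {n : ℕ} (Rbar : ℕ → ℝ) (σ : Fin n → ℝ) : ℝ :=
  ∑ m ∈ Finset.range (n + 1), poissonBinom σ m * Rbar (m + 1)

/-!
Conditioning on whether user `j` connects writes `r̄` as an average, over the Poisson-binomial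
distribution of the remaining `n - 1` users, of `(1 - σ j) R̄(m + 1) + σ j R̄(m + 2)`.
This is affine in `σ j`, and each of its terms decreases in `σ j` because `R̄` is nonincreasing.
-/

namespace Finset

theorem sum_powersetCard_succ_insert {α β : Type*} [DecidableEq α] [AddCommMonoid β]
    {a : α} {s : Finset α} (ha : a ∉ s) (m : ℕ) (f : Finset α → β) :
    ∑ t ∈ (insert a s).powersetCard (m + 1), f t =
      ∑ t ∈ s.powersetCard (m + 1), f t + ∑ t ∈ s.powersetCard m, f (insert a t) := by
  have notMem_of_mem {k : ℕ} {t : Finset α} (ht : t ∈ s.powersetCard k) : a ∉ t :=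
    fun hat ↦ ha ((mem_powersetCard.1 ht).1 hat)
  rw [powersetCard_succ_insert ha, sum_union, sum_image]
  · intro t ht u hu htu
    rw [← erase_insert (notMem_of_mem ht), ← erase_insert (notMem_of_mem hu), htu]
  · refine disjoint_left.2 fun t ht ht' ↦ ?_
    obtain ⟨u, -, rfl⟩ := mem_image.1 ht'
    exact notMem_of_mem ht (mem_insert_self a u)

end Finset

section PoissonBinomial

variable {ι R : Type*} [DecidableEq ι] [CommRing R]

def poissonBinomOn (s : Finset ι) (p : ι → R) (m : ℕ) : R :=
  ∑ t ∈ s.powersetCard m, (∏ i ∈ t, p i) * ∏ i ∈ s \ t, (1 - p i)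

variable {s : Finset ι} (p : ι → R)

theorem poissonBinomOn_eq_zero_of_card_lt {m : ℕ} (h : #s < m) : poissonBinomOn s p m = 0 := by
  rw [poissonBinomOn, powersetCard_eq_empty.2 h, sum_empty]

theorem poissonBinomOn_update_of_notMem {a : ι} (ha : a ∉ s) (x : R) :
    poissonBinomOn s (Function.update p a x) = poissonBinomOn s p := by
  funext m
  refine sum_congr rfl fun t ht ↦ ?_
  have hne {i : ι} (hi : i ∈ s) : i ≠ a := ne_of_mem_of_not_mem hi ha
  have hts := (mem_powersetCard.1 ht).1
  congr 1
  · exact prod_congr rfl fun i hi ↦ Function.update_of_ne (hne (hts hi)) x p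
  · exact prod_congr rfl fun i hi ↦ by rw [Function.update_of_ne (hne (mem_sdiff.1 hi).1) x p]

theorem poissonBinomOn_insert_zero {a : ι} (ha : a ∉ s) :
    poissonBinomOn (insert a s) p 0 = (1 - p a) * poissonBinomOn s p 0 := by
  simp only [poissonBinomOn, powersetCard_zero, sum_singleton, prod_empty, one_mul, sdiff_empty,
    prod_insert ha]

theorem poissonBinomOn_insert_succ {a : ι} (ha : a ∉ s) (m : ℕ) :
    poissonBinomOn (insert a s) p (m + 1) =
      (1 - p a) * poissonBinomOn s p (m + 1) + p a * poissonBinomOn s p m := by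
  have notMem_of_mem {k : ℕ} {t : Finset ι} (ht : t ∈ s.powersetCard k) : a ∉ t :=
    fun hat ↦ ha ((mem_powersetCard.1 ht).1 hat)
  rw [poissonBinomOn, sum_powersetCard_succ_insert ha, poissonBinomOn, poissonBinomOn, mul_sum,
    mul_sum]
  congr 1 <;> refine sum_congr rfl fun t ht ↦ ?_
  · rw [insert_sdiff_of_notMem s (notMem_of_mem ht), prod_insert fun h ↦ ha (mem_sdiff.1 h).1]
    ring
  · rw [insert_sdiff_insert, sdiff_insert_of_notMem ha, prod_insert (notMem_of_mem ht)]
    ring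

theorem poissonBinomOn_nonneg [PartialOrder R] [IsOrderedRing R]
    (hp : ∀ i ∈ s, p i ∈ Set.Icc 0 1) (m : ℕ) : 0 ≤ poissonBinomOn s p m :=
  sum_nonneg fun _ ht ↦
    have hts := (mem_powersetCard.1 ht).1
    mul_nonneg (prod_nonneg fun i hi ↦ (hp i (hts hi)).1)
      (prod_nonneg fun i hi ↦ sub_nonneg.2 (hp i (mem_sdiff.1 hi).1).2)

end PoissonBinomial

theorem poissonBinom_eq_poissonBinomOn_univ {n : ℕ} (σ : Fin n → ℝ) (m : ℕ) :
    poissonBinom σ m = poissonBinomOn univ σ m := by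
  simp only [poissonBinom, poissonBinomOn, compl_eq_univ_sdiff]

theorem expRate_update {n : ℕ} (Rbar : ℕ → ℝ) (σ : Fin n → ℝ) (j : Fin n) (x : ℝ) :
    expRate Rbar (Function.update σ j x) =
      ∑ m ∈ range n,
        poissonBinomOn (univ.erase j) σ m * ((1 - x) * Rbar (m + 1) + x * Rbar (m + 2)) := by
  set Q := poissonBinomOn (univ.erase j) σ
  have hj : j ∉ univ.erase j := notMem_erase j univ
  have hP (m : ℕ) : poissonBinom (Function.update σ j x) m =
      poissonBinomOn (insert j (univ.erase j)) (Function.update σ j x) m := by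
    rw [insert_erase (mem_univ j), poissonBinom_eq_poissonBinomOn_univ]
  have hQn : Q n = 0 := poissonBinomOn_eq_zero_of_card_lt σ (by simpa using j.pos)
  have hshift : ∑ m ∈ range n, Q (m + 1) * Rbar (m + 2) + Q 0 * Rbar 1 =
      ∑ m ∈ range n, Q m * Rbar (m + 1) := by
    rw [← sum_range_succ' (fun m ↦ Q m * Rbar (m + 1)), sum_range_succ, hQn, zero_mul, add_zero]
  simp only [expRate, sum_range_succ', hP, poissonBinomOn_insert_succ _ hj,
    poissonBinomOn_insert_zero _ hj, poissonBinomOn_update_of_notMem _ hj, Function.update_self]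
  have hsplit : ∑ m ∈ range n, Q m * ((1 - x) * Rbar (m + 1) + x * Rbar (m + 2)) =
      (1 - x) * ∑ m ∈ range n, Q m * Rbar (m + 1) +
        x * ∑ m ∈ range n, Q m * Rbar (m + 2) := by
    rw [mul_sum, mul_sum, ← sum_add_distrib]
    exact sum_congr rfl fun m _ ↦ by ring
  rw [hsplit, ← hshift]
  simp only [add_mul, sum_add_distrib, mul_assoc, ← mul_sum]
  ring

theorem stmt_14_general (n : ℕ) (Rbar : ℕ → ℝ)
    (hmono : ∀ a b : ℕ, a ≤ b → Rbar b ≤ Rbar a)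
    (σ : Fin n → ℝ) (hσ : ∀ j, σ j ∈ Set.Icc (0:ℝ) 1)
    (j : Fin n) (s' : ℝ) (h : σ j ≤ s') :
    expRate Rbar (Function.update σ j s') ≤ expRate Rbar σ := by
  conv_rhs => rw [← Function.update_eq_self j σ]
  rw [expRate_update, expRate_update]
  refine sum_le_sum fun m _ ↦ mul_le_mul_of_nonneg_left ?_ ?_
  · have hdrop :=
      mul_le_mul_of_nonneg_left (hmono (m + 1) (m + 2) (by omega)) (sub_nonneg.2 h)
    linarith
  · exact poissonBinomOn_nonneg σ (fun i _ ↦ hσ i) m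

/-- Congestion effect: the expected data rate is nonincreasing in each of
the other users' connection probabilities. -/
theorem stmt_14 (n : ℕ) (Rbar : ℕ → ℝ)
    (hpos : ∀ k, 0 < Rbar k)
    (hmono : ∀ a b : ℕ, a ≤ b → Rbar b ≤ Rbar a)
    (σ : Fin n → ℝ) (hσ : ∀ j, σ j ∈ Set.Icc (0:ℝ) 1)
    (j : Fin n) (s' : ℝ) (hs' : s' ∈ Set.Icc (0:ℝ) 1) (h : σ j ≤ s') :
    expRate Rbar (Function.update σ j s') ≤ expRate Rbar σ :=
  stmt_14_general n Rbar hmono σ hσ j s' h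
end
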